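/- Let n, ℓ, δ be positive integers with 2δ < ℓ ≤ n/2, ℓ ∣ n and b = n/ℓ ≥ 2, and let C ⊆ 𝔽₂ⁿ be a block-by-block decodable code that detects up to δ deletions per block. Then for every codeword x ∈ C, every j ∈ {1,…,b−1}, and every i₁ ∈ {ℓ−δ+1,…,ℓ}, the (δ+1)-st bit of block j+1 differs from the bit of block j at position i₁; in global coordinates, x_{jℓ+δ+1} ≠ x_{(j−1)ℓ+i₁}. -/
import Mathlib


/-- The `i`-th bit (0-indexed) of `x ∈ 𝔽₂ⁿ`, with default `false` out of range. -/
def bitAt (n : ℕ) (x : Fin n → Bool) (i : ℕ) : Bool :=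
  if h : i < n then x ⟨i, h⟩ else false

/-- The `j`-th block (1-indexed, of length `ℓ`) of `x ∈ 𝔽₂ⁿ`, as a list. -/
def blockList (n ℓ : ℕ) (x : Fin n → Bool) (j : ℕ) : List Bool :=
  (List.range ℓ).map (fun i => bitAt n x ((j - 1) * ℓ + i))

/-- `y` is a `δ`-per-block deletion output of `x` with deletion pattern `d`:
`y = ⟨y¹,…,y^b⟩` where each `y^j` is a subsequence of block `j` of `x`
of length `ℓ - d j`, with `d j ≤ δ`. -/
def IsDelOutput (n ℓ δ : ℕ) (x : Fin n → Bool) (d : ℕ → ℕ) (y : List Bool) : Prop :=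
  ∃ ys : ℕ → List Bool,
    (∀ j ∈ Finset.Icc 1 (n / ℓ),
      (ys j).Sublist (blockList n ℓ x j) ∧ d j ≤ δ ∧ (ys j).length = ℓ - d j) ∧
    y = ((List.range (n / ℓ)).map (fun j => ys (j + 1))).flatten

/-- `C ⊆ 𝔽₂ⁿ` detects up to `δ` deletions per block. -/
def Detects (n ℓ δ : ℕ) (C : Set (Fin n → Bool)) : Prop :=
  ∀ x ∈ C, ∀ x' ∈ C, ∀ d d' : ℕ → ℕ, ∀ y : List Bool,
    IsDelOutput n ℓ δ x d y → IsDelOutput n ℓ δ x' d' y →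
    ∀ j ∈ Finset.Icc 1 (n / ℓ), d j = d' j

/-- The 0-indexed starting position `α_j - 1` of block `j` in the output,
given the deletion pattern `d`. -/
def startIdx (ℓ : ℕ) (d : ℕ → ℕ) (j : ℕ) : ℕ :=
  ∑ m ∈ Finset.Icc 1 (j - 1), (ℓ - d m)

/-- The window `(y_{α_j},…,y_{α_j+ℓ-1})` of length `ℓ` of the list `y`
starting at 0-indexed position `s = α_j - 1`. -/
def window (ℓ : ℕ) (y : List Bool) (s : ℕ) : Fin ℓ → Bool :=
  fun i => y.getD (s + i) false

/-- `C` is block-by-block decodable. -/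
def BlockDecodable (n ℓ δ : ℕ) (C : Set (Fin n → Bool)) : Prop :=
  ∃ f : ℕ → (Fin ℓ → Bool) → ℕ,
    (∀ j w, f j w ≤ δ) ∧
    ∀ x ∈ C, ∀ d : ℕ → ℕ, ∀ y : List Bool, IsDelOutput n ℓ δ x d y →
      ∀ j ∈ Finset.Icc 1 (n / ℓ - 1),
        f j (window ℓ y (startIdx ℓ d j)) = d j

private lemma blockList_length (n ℓ : ℕ) (x : Fin n → Bool) (m : ℕ) :
    (blockList n ℓ x m).length = ℓ := by simp [blockList]

private lemma blockList_getElem? (n ℓ : ℕ) (x : Fin n → Bool) (m i : ℕ) (h : i < ℓ) :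
    (blockList n ℓ x m)[i]? = some (bitAt n x ((m-1)*ℓ + i)) := by
  simp [blockList, List.getElem?_map, List.getElem?_range, h]

/-- Output blocks: block `j` replaced by `u`, block `j+1` by `v`, others full. -/
def modOut (n ℓ : ℕ) (x : Fin n → Bool) (j : ℕ) (u v : List Bool) : ℕ → List Bool :=
  fun m => if m = j then u else if m = j+1 then v else blockList n ℓ x m

private lemma isDelOutput_mod (n ℓ δ : ℕ) (x : Fin n → Bool) (j dj dj1 : ℕ)
    (u v : List Bool) (hu : u.Sublist (blockList n ℓ x j))
    (hv : v.Sublist (blockList n ℓ x (j+1)))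
    (hdj : dj ≤ δ) (hdj1 : dj1 ≤ δ) (hul : u.length = ℓ - dj) (hvl : v.length = ℓ - dj1) :
    IsDelOutput n ℓ δ x (fun m => if m = j then dj else if m = j+1 then dj1 else 0)
      (((List.range (n/ℓ)).map (fun m => modOut n ℓ x j u v (m+1))).flatten) := by
  refine ⟨modOut n ℓ x j u v, fun m _ => ?_, rfl⟩
  by_cases h1 : m = j
  · subst h1; simp only [modOut, if_pos rfl]; exact ⟨hu, hdj, hul⟩
  · by_cases h2 : m = j + 1
    · subst h2
      simp only [modOut, if_neg h1, if_pos rfl]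
      exact ⟨hv, hdj1, hvl⟩
    · simp only [modOut, if_neg h1, if_neg h2]
      exact ⟨List.Sublist.refl _, Nat.zero_le _, by simp [blockList_length]⟩

private lemma flatten_split (b j : ℕ) (hj1 : 1 ≤ j) (hjb : j + 1 ≤ b) (ys : ℕ → List Bool) :
    ((List.range b).map (fun m => ys (m+1))).flatten =
      ((List.range (j-1)).map (fun m => ys (m+1))).flatten ++
      (ys j ++ (ys (j+1) ++ ((List.range (b-(j+1))).map (fun m => ys (m+j+2))).flatten)) := by
  obtain ⟨p, rfl⟩ : ∃ p, j = p + 1 := ⟨j - 1, by omega⟩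
  obtain ⟨c, rfl⟩ : ∃ c, b = (p+1+1) + c := ⟨b - (p+2), by omega⟩
  rw [List.range_add, List.range_add, List.range_add,
    show List.range 1 = [0] from rfl, show p + 1 - 1 = p from rfl,
    show p + 1 + 1 + c - (p + 1 + 1) = c by omega]
  simp only [List.map_append, List.flatten_append, List.map_cons,
    List.map_nil, List.flatten_cons, List.flatten_nil, List.map_map, Function.comp,
    List.append_nil, List.append_assoc, List.nil_append]
  rw [show p + 0 + 1 = p + 1 by omega, show p + 1 + 0 + 1 = p + 1 + 1 by omega]
  congr 3
  exact congrArg List.flatten (List.map_congr_left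
    (fun m _ => by show ys (p+1+1+m+1) = ys (m+(p+1)+2); congr 1; omega))

private lemma flatten_mod (n ℓ : ℕ) (x : Fin n → Bool) (j : ℕ)
    (hj1 : 1 ≤ j) (hjb : j + 1 ≤ n/ℓ) (u v : List Bool) :
    ((List.range (n/ℓ)).map (fun m => modOut n ℓ x j u v (m+1))).flatten =
      ((List.range (j-1)).map (fun m => blockList n ℓ x (m+1))).flatten ++
      (u ++ (v ++ ((List.range (n/ℓ-(j+1))).map (fun m => blockList n ℓ x (m+j+2))).flatten)) := by
  rw [flatten_split (n/ℓ) j hj1 hjb]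
  have e1 : (List.range (j-1)).map (fun m => modOut n ℓ x j u v (m+1)) =
      (List.range (j-1)).map (fun m => blockList n ℓ x (m+1)) :=
    List.map_congr_left (fun m hm => by
      rw [List.mem_range] at hm
      simp only [modOut, if_neg (by omega : ¬ m + 1 = j), if_neg (by omega : ¬ m + 1 = j + 1)])
  have e2 : (List.range (n/ℓ-(j+1))).map (fun m => modOut n ℓ x j u v (m+j+2)) =
      (List.range (n/ℓ-(j+1))).map (fun m => blockList n ℓ x (m+j+2)) :=
    List.map_congr_left (fun m hm => by
      simp only [modOut, if_neg (by omega : ¬ m + j + 2 = j), if_neg (by omega : ¬ m + j + 2 = j + 1)])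
  rw [e1, e2]
  simp [modOut]

private lemma prefix_length (n ℓ : ℕ) (x : Fin n → Bool) (k : ℕ) :
    (((List.range k).map (fun m => blockList n ℓ x (m+1))).flatten).length = k * ℓ := by
  rw [List.length_flatten, List.map_map]
  have : (List.range k).map (List.length ∘ fun m => blockList n ℓ x (m+1)) =
      (List.range k).map (fun _ => ℓ) :=
    List.map_congr_left (fun m _ => blockList_length n ℓ x (m+1))
  rw [this]
  simp [List.map_const', mul_comm]




private lemma startIdx_const (ℓ : ℕ) (d : ℕ → ℕ) (j : ℕ)
    (h : ∀ m, 1 ≤ m → m ≤ j - 1 → d m = 0) :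
    startIdx ℓ d j = (j-1) * ℓ := by
  unfold startIdx
  rw [Finset.sum_congr rfl (fun m hm => by
    rw [h m (Finset.mem_Icc.mp hm).1 (Finset.mem_Icc.mp hm).2, Nat.sub_zero])]
  rw [Finset.sum_const, Nat.card_Icc, show j - 1 + 1 - 1 = j - 1 by omega, smul_eq_mul]

private lemma getD_mod (n ℓ : ℕ) (x : Fin n → Bool) (j : ℕ)
    (hj1 : 1 ≤ j) (hjb : j + 1 ≤ n/ℓ) (u v : List Bool) (i : ℕ) :
    (((List.range (n/ℓ)).map (fun m => modOut n ℓ x j u v (m+1))).flatten).getD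
        ((j-1)*ℓ + i) false =
      (u ++ (v ++ ((List.range (n/ℓ-(j+1))).map
        (fun m => blockList n ℓ x (m+j+2))).flatten)).getD i false := by
  rw [flatten_mod n ℓ x j hj1 hjb, List.getD_eq_getElem?_getD, List.getD_eq_getElem?_getD,
    List.getElem?_append_right (by rw [prefix_length]; omega)]
  rw [prefix_length, show (j-1)*ℓ + i - (j-1)*ℓ = i by omega]

private lemma det_neq (n ℓ δ : ℕ) (hδ : 0 < δ) (hδℓ : δ < ℓ)
    (C : Set (Fin n → Bool)) (hC : Detects n ℓ δ C)
    (x : Fin n → Bool) (hx : x ∈ C)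
    (j : ℕ) (hj1 : 1 ≤ j) (hjb : j + 1 ≤ n / ℓ)
    (p : ℕ) (hp1 : ℓ - δ + 1 ≤ p) (hp2 : p ≤ ℓ) :
    bitAt n x ((j-1)*ℓ + (p-1)) ≠ bitAt n x (j*ℓ) := by
  intro heq
  set B1 := blockList n ℓ x j with hB1
  set B2 := blockList n ℓ x (j+1) with hB2
  set t := ℓ - p + 1 with ht
  have hpl : p - 1 < ℓ := by omega
  have hA := isDelOutput_mod n ℓ δ x j t 0 (B1.take (p-1)) B2
    (List.take_sublist _ _) (List.Sublist.refl _) (by omega) (by omega)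
    (by rw [List.length_take, hB1, blockList_length]; omega)
    (by rw [hB2, blockList_length]; omega)
  have hB := isDelOutput_mod n ℓ δ x j (t-1) 1 (B1.take p) (B2.drop 1)
    (List.take_sublist _ _) (List.drop_sublist _ _) (by omega) (by omega)
    (by rw [List.length_take, hB1, blockList_length]; omega)
    (by rw [List.length_drop, hB2, blockList_length])
  have hyeq : ((List.range (n/ℓ)).map
        (fun m => modOut n ℓ x j (B1.take (p-1)) B2 (m+1))).flatten
      = ((List.range (n/ℓ)).map
        (fun m => modOut n ℓ x j (B1.take p) (B2.drop 1) (m+1))).flatten := by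
    rw [flatten_mod n ℓ x j hj1 hjb, flatten_mod n ℓ x j hj1 hjb]
    congr 1
    rw [← List.append_assoc, ← List.append_assoc]
    congr 1
    have h1 : B1.take p = B1.take (p-1) ++ [bitAt n x ((j-1)*ℓ + (p-1))] := by
      rw [show p = (p-1)+1 by omega, List.take_succ, hB1,
        blockList_getElem? n ℓ x j (p-1) hpl]
      rfl
    have h02 : B2[0]? = some (bitAt n x (j*ℓ)) := by
      have := blockList_getElem? n ℓ x (j+1) 0 (by omega)
      simpa [show j+1-1 = j from rfl] using this
    have h2 : B2 = [bitAt n x (j*ℓ)] ++ B2.drop 1 := by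
      conv_lhs => rw [← List.take_append_drop 1 B2]
      congr 1
      rw [show (1:ℕ) = 0+1 from rfl, List.take_succ, List.take_zero, List.nil_append, h02]
      rfl
    rw [h1, List.append_assoc]
    conv_lhs => rw [h2]
    rw [heq]
  rw [← hyeq] at hB
  have hd := hC x hx x hx _ _ _ hA hB j (Finset.mem_Icc.mpr ⟨hj1, by omega⟩)
  simp only [eq_self_iff_true, if_true] at hd
  omega

private lemma bd_neq (n ℓ δ : ℕ) (hδ : 0 < δ) (hδℓ : δ < ℓ)
    (C : Set (Fin n → Bool)) (hBD : BlockDecodable n ℓ δ C)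
    (x : Fin n → Bool) (hx : x ∈ C)
    (j : ℕ) (hj1 : 1 ≤ j) (hjb : j + 1 ≤ n / ℓ) :
    bitAt n x ((j-1)*ℓ + (ℓ-1)) ≠ bitAt n x (j*ℓ + δ) := by
  intro heq
  obtain ⟨f, hfle, hdec⟩ := hBD
  set B1 := blockList n ℓ x j with hB1
  set B2 := blockList n ℓ x (j+1) with hB2
  have h0 := isDelOutput_mod n ℓ δ x j 0 0 B1 B2 (List.Sublist.refl _) (List.Sublist.refl _)
    (Nat.zero_le _) (Nat.zero_le _) (by rw [hB1, blockList_length]; omega)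
    (by rw [hB2, blockList_length]; omega)
  have h1 := isDelOutput_mod n ℓ δ x j 1 δ (B1.take (ℓ-1)) (B2.drop δ)
    (List.take_sublist _ _) (List.drop_sublist _ _) hδ (le_refl δ)
    (by rw [List.length_take, hB1, blockList_length]; omega)
    (by rw [List.length_drop, hB2, blockList_length])
  have hjmem : j ∈ Finset.Icc 1 (n/ℓ - 1) := Finset.mem_Icc.mpr ⟨hj1, by omega⟩
  have e0 := hdec x hx _ _ h0 j hjmem
  have e1 := hdec x hx _ _ h1 j hjmem
  rw [startIdx_const ℓ _ j (fun m h1' h2' => by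
    simp only [if_neg (by omega : ¬ m = j), if_neg (by omega : ¬ m = j+1)])] at e0 e1
  simp only [eq_self_iff_true, if_true] at e0 e1
  have hw : window ℓ (((List.range (n/ℓ)).map (fun m => modOut n ℓ x j B1 B2 (m+1))).flatten)
        ((j-1)*ℓ)
      = window ℓ (((List.range (n/ℓ)).map
        (fun m => modOut n ℓ x j (B1.take (ℓ-1)) (B2.drop δ) (m+1))).flatten) ((j-1)*ℓ) := by
    funext i
    show _ = _
    unfold window
    rw [getD_mod n ℓ x j hj1 hjb, getD_mod n ℓ x j hj1 hjb]
    have hiℓ : (i : ℕ) < ℓ := i.2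
    rw [List.getD_eq_getElem?_getD, List.getD_eq_getElem?_getD]
    rw [List.getElem?_append_left (by rw [hB1, blockList_length]; exact hiℓ)]
    by_cases hc : (i : ℕ) < ℓ - 1
    · rw [List.getElem?_append_left (by rw [List.length_take, hB1, blockList_length]; omega),
        List.getElem?_take, if_pos hc]
    · have hieq : (i : ℕ) = ℓ - 1 := by omega
      rw [List.getElem?_append_right (by rw [List.length_take, hB1, blockList_length]; omega)]
      rw [List.length_take, hB1, blockList_length,
        show (i:ℕ) - min (ℓ-1) ℓ = 0 by omega]
      rw [List.getElem?_append_left (by rw [List.length_drop, hB2, blockList_length]; omega)]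
      rw [List.getElem?_drop, hB2, blockList_getElem? n ℓ x j _ hiℓ,
        blockList_getElem? n ℓ x (j+1) (δ+0) (by omega)]
      simp only [Option.getD_some]
      rw [show j+1-1 = j from rfl, show δ + 0 = δ from rfl, hieq]
      exact heq
  rw [hw, e1] at e0
  exact absurd e0 (by omega)

/-- In any block-by-block decodable code detecting up to d deletions
per block, for every codeword x, boundary j and i1 in [l-d+1, l],
the (d+1)-st bit of block j+1 differs from the bit of block j at position i1. -/
theorem boundary_bit_differ_block_decodable
    (n ℓ δ : ℕ) (hδ : 0 < δ) (hℓ : 2 * δ < ℓ) (hℓn : ℓ ≤ n / 2) (hdvd : ℓ ∣ n)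
    (hb : 2 ≤ n / ℓ)
    (C : Set (Fin n → Bool)) (hC : Detects n ℓ δ C) (hBD : BlockDecodable n ℓ δ C)
    (x : Fin n → Bool) (hx : x ∈ C) :
    ∀ j ∈ Finset.Icc 1 (n / ℓ - 1), ∀ i₁ ∈ Finset.Icc (ℓ - δ + 1) ℓ,
      bitAt n x (j * ℓ + δ + 1 - 1) ≠ bitAt n x ((j - 1) * ℓ + i₁ - 1) := by
  intro j hj i₁ hi₁
  rw [Finset.mem_Icc] at hj hi₁
  have hδℓ : δ < ℓ := by omega
  have hj1 : 1 ≤ j := hj.1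
  have hjb : j + 1 ≤ n / ℓ := by omega
  have hE := det_neq n ℓ δ hδ hδℓ C hC x hx j hj1 hjb ℓ (by omega) (le_refl ℓ)
  have hH := det_neq n ℓ δ hδ hδℓ C hC x hx j hj1 hjb i₁ hi₁.1 hi₁.2
  have hA := bd_neq n ℓ δ hδ hδℓ C hBD x hx j hj1 hjb
  rw [show j*ℓ + δ + 1 - 1 = j*ℓ + δ by omega,
    show (j-1)*ℓ + i₁ - 1 = (j-1)*ℓ + (i₁ - 1) by omega]
  have key : ∀ a g e h : Bool, e ≠ g → h ≠ g → e ≠ a → a ≠ h := by decide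
  exact key _ _ _ _ hE hH hA
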